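/- arXiv:1609.07942 — 2 statements merged into one kernel-verified Lean document; each statement's English description precedes it below -/
import Mathlib

section
/- For a finite set G of measurable functions on X, all bounded in absolute value by Γ, for i.i.d. random variables Y_0,…,Y_m with law Q, and real weights p_0,…,p_m, there is a universal constant C (one may take C = 24) such that E[max_{g∈G} |∑_{i=0}^m p_i (g(Y_i) − Q(g))|] ≤ C·(√(∑ p_i²)·Δ·√(log(1+|G|)) + max_i |p_i|·Γ·log(1+|G|)), where Δ² = max_{g∈G} Q(g²). -/
/-!
Each centred weighted sum `S_g = ∑ p_k (g(Y_k) - Q g)` has a Bernstein-type moment generating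
function: from `exp u ≤ 1 + u + u²` for `|u| ≤ 1` and independence,
`E exp(t S_g) ≤ exp(t² ∑ p_k² Δ²)` whenever `t · 2 max_k |p_k| Γ ≤ 1`. Bounding
`exp(t max_g |S_g|)` by `∑_g (exp(t S_g) + exp(-t S_g))` and using `x ≤ (a - 1 + e^{-a} e^{tx}) / t`
gives `E max_g |S_g| ≤ log(2|G|) / t + t ∑ p_k² Δ²` for every admissible `t`; the best admissible
`t` yields `2 √(log(2|G|) ∑ p_k² Δ²) + 2 log(2|G|) max_k |p_k| Γ`.
-/

open MeasureTheory ProbabilityTheory Finset Real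

theorem exp_mul_sup'_abs_le_sum {ι : Type*} (G : Finset ι) (hG : G.Nonempty) (z : ι → ℝ)
    (t : ℝ) :
    exp (t * G.sup' hG fun i ↦ |z i|) ≤ ∑ i ∈ G, (exp (t * z i) + exp (-t * z i)) := by
  obtain ⟨j, hj, hsup⟩ := G.exists_mem_eq_sup' hG fun i ↦ |z i|
  have hj_le : exp (t * |z j|) ≤ exp (t * z j) + exp (-t * z j) := by
    rcases abs_cases (z j) with ⟨h, -⟩ | ⟨h, -⟩ <;> rw [h]
    · exact le_add_of_nonneg_right (exp_nonneg _)
    · rw [neg_mul_comm]; exact le_add_of_nonneg_left (exp_nonneg _)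
  rw [hsup]
  exact hj_le.trans <| single_le_sum (f := fun i ↦ exp (t * z i) + exp (-t * z i))
    (fun i _ ↦ by positivity) hj

theorem le_two_mul_sqrt_add_mul_of_forall_le_div_add_mul {E a b v : ℝ} (ha : 0 < a) (hb : 0 ≤ b)
    (hv : 0 ≤ v) (h : ∀ t, 0 < t → t * b ≤ 1 → E ≤ a / t + t * v) :
    E ≤ 2 * √(a * v) + a * b := by
  refine le_of_forall_pos_le_add fun ε hε ↦ ?_
  set s := √(a * v)
  have hs : 0 ≤ s := sqrt_nonneg _
  have hs2 : s ^ 2 = a * v := sq_sqrt (mul_nonneg ha.le hv)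
  set D := a * b + s + ε
  have hab : 0 ≤ a * b := mul_nonneg ha.le hb
  have hD : 0 < D := by positivity
  -- `t = a / D` is admissible and nearly balances `a / t` against `t * v`
  have hE := h (a / D) (by positivity) (by rw [div_mul_eq_mul_div, div_le_one hD]; linarith)
  have hvD : a / D * v ≤ s := by
    rw [div_mul_eq_mul_div, div_le_iff₀ hD, ← hs2]; nlinarith
  rw [div_div_cancel₀ ha.ne'] at hE
  linarith

theorem log_two_mul_le_two_mul_log_one_add {n : ℝ} (hn : 0 < n) :
    log (2 * n) ≤ 2 * log (1 + n) := by
  rw [← log_rpow (by linarith)]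
  exact log_le_log (by positivity) (by norm_num; nlinarith)

theorem integral_le_div_of_exp_mul_le {Ω : Type*} [MeasurableSpace Ω] {P : Measure Ω}
    [IsProbabilityMeasure P] {F H : Ω → ℝ} {t a : ℝ} (ht : 0 < t) (hF : 0 ≤ᵐ[P] F)
    (hH : Integrable H P) (hFH : ∀ ω, exp (t * F ω) ≤ H ω) (hHa : ∫ ω, H ω ∂P ≤ exp a) :
    ∫ ω, F ω ∂P ≤ a / t := by
  -- `u + 1 ≤ exp u` at `u = t F - a`
  have hpt : ∀ ω, t * F ω ≤ a - 1 + exp (-a) * H ω := fun ω ↦ by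
    have h1 := add_one_le_exp (t * F ω - a)
    rw [sub_eq_add_neg, exp_add] at h1
    nlinarith [mul_le_mul_of_nonneg_left (hFH ω) (exp_pos (-a)).le]
  have hint := integral_mono_of_nonneg (g := fun ω ↦ a - 1 + exp (-a) * H ω)
    (hF.mono fun ω h ↦ mul_nonneg ht.le h)
    ((integrable_const _).add (hH.const_mul _)) (ae_of_all _ hpt)
  rw [integral_const_mul, integral_add (integrable_const _) (hH.const_mul _), integral_const,
    integral_const_mul] at hint
  have hexp : exp (-a) * ∫ ω, H ω ∂P ≤ 1 := by
    calc exp (-a) * ∫ ω, H ω ∂P ≤ exp (-a) * exp a := by gcongr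
      _ = 1 := by rw [← exp_add, neg_add_cancel, exp_zero]
  rw [le_div_iff₀ ht]
  simp only [probReal_univ, one_smul] at hint
  linarith

theorem mgf_le_exp_mul_integral_sq {Ω : Type*} [MeasurableSpace Ω] {μ : Measure Ω}
    [IsProbabilityMeasure μ] {X : Ω → ℝ} {t : ℝ} (hX : AEMeasurable X μ)
    (hbound : ∀ ω, |t * X ω| ≤ 1) (hmean : ∫ ω, X ω ∂μ = 0) :
    mgf X μ t ≤ exp (t ^ 2 * ∫ ω, X ω ^ 2 ∂μ) := by
  have htX : AEStronglyMeasurable (fun ω ↦ t * X ω) μ := (hX.const_mul t).aestronglyMeasurable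
  have hint : Integrable (fun ω ↦ t * X ω) μ := .of_bound htX 1 (ae_of_all _ hbound)
  have hint2 : Integrable (fun ω ↦ (t * X ω) ^ 2) μ :=
    .of_bound (htX.pow 2) 1 (ae_of_all _ fun ω ↦ by
      rw [norm_pow, norm_eq_abs]; exact pow_le_one₀ (abs_nonneg _) (hbound ω))
  have hexp : Integrable (fun ω ↦ exp (t * X ω)) μ :=
    .of_mem_Icc 0 (exp 1) (hX.const_mul t).exp
      (ae_of_all _ fun ω ↦ ⟨(exp_pos _).le, exp_le_exp.mpr (abs_le.mp (hbound ω)).2⟩)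
  have hpt : ∀ ω, exp (t * X ω) ≤ 1 + t * X ω + (t * X ω) ^ 2 := fun ω ↦ by
    linarith [(abs_le.mp (abs_exp_sub_one_sub_id_le (hbound ω))).2]
  calc mgf X μ t ≤ ∫ ω, (1 + t * X ω + (t * X ω) ^ 2) ∂μ :=
        integral_mono hexp ((integrable_const 1).add hint |>.add hint2) hpt
    _ = 1 + t ^ 2 * ∫ ω, X ω ^ 2 ∂μ := by
        rw [integral_add (f := fun ω ↦ 1 + t * X ω) ((integrable_const 1).add hint) hint2,
          integral_add (integrable_const 1) hint, integral_const_mul, hmean]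
        simp [mul_pow, integral_const_mul]
    _ ≤ exp (t ^ 2 * ∫ ω, X ω ^ 2 ∂μ) := by
        linarith [add_one_le_exp (t ^ 2 * ∫ ω, X ω ^ 2 ∂μ)]

theorem ProbabilityTheory.iIndepFun.mgf_sum_le_exp_mul_sum_integral_sq {Ω ι : Type*}
    [MeasurableSpace Ω] {μ : Measure Ω} {X : ι → Ω → ℝ} {t : ℝ} (h_indep : iIndepFun X μ)
    (h_meas : ∀ i, Measurable (X i)) (s : Finset ι) (hbound : ∀ i ∈ s, ∀ ω, |t * X i ω| ≤ 1)
    (hmean : ∀ i ∈ s, ∫ ω, X i ω ∂μ = 0) :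
    mgf (∑ i ∈ s, X i) μ t ≤ exp (t ^ 2 * ∑ i ∈ s, ∫ ω, X i ω ^ 2 ∂μ) := by
  have := h_indep.isProbabilityMeasure
  rw [h_indep.mgf_sum h_meas, mul_sum, exp_sum]
  exact prod_le_prod (fun _ _ ↦ mgf_nonneg) fun i hi ↦
    mgf_le_exp_mul_integral_sq (h_meas i).aemeasurable (hbound i hi) (hmean i hi)

theorem integral_sup'_abs_le_of_mgf_le {Ω ι : Type*} [MeasurableSpace Ω] {P : Measure Ω}
    [IsProbabilityMeasure P] {Z : ι → Ω → ℝ} (G : Finset ι) (hG : G.Nonempty) {t ψ : ℝ}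
    (ht : 0 < t) (h_int : ∀ i ∈ G, ∀ s, |s| = t → Integrable (fun ω ↦ exp (s * Z i ω)) P)
    (h_mgf : ∀ i ∈ G, ∀ s, |s| = t → mgf (Z i) P s ≤ exp ψ) :
    ∫ ω, G.sup' hG (fun i ↦ |Z i ω|) ∂P ≤ (log (2 * G.card) + ψ) / t := by
  have htt : |t| = t := abs_of_pos ht
  have hnt : |-t| = t := by rw [abs_neg, htt]
  have h_int₂ : ∀ i ∈ G, Integrable (fun ω ↦ exp (t * Z i ω) + exp (-t * Z i ω)) P :=
    fun i hi ↦ (h_int i hi t htt).add (h_int i hi (-t) hnt)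
  obtain ⟨i₀, hi₀⟩ := id hG
  have hcard : (0 : ℝ) < G.card := mod_cast hG.card_pos
  refine integral_le_div_of_exp_mul_le ht
    (ae_of_all _ fun ω ↦ (abs_nonneg _).trans (le_sup' (fun i ↦ |Z i ω|) hi₀))
    (integrable_finsetSum G h_int₂) (fun ω ↦ exp_mul_sup'_abs_le_sum G hG (Z · ω) t) ?_
  rw [integral_finsetSum G h_int₂, exp_add, exp_log (by positivity)]
  calc ∑ i ∈ G, ∫ ω, (exp (t * Z i ω) + exp (-t * Z i ω)) ∂P
      = ∑ i ∈ G, (mgf (Z i) P t + mgf (Z i) P (-t)) :=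
        sum_congr rfl fun i hi ↦ integral_add (h_int i hi t htt) (h_int i hi (-t) hnt)
    _ ≤ ∑ _i ∈ G, 2 * exp ψ :=
        sum_le_sum fun i hi ↦ by linarith [h_mgf i hi t htt, h_mgf i hi (-t) hnt]
    _ = 2 * G.card * exp ψ := by rw [sum_const, nsmul_eq_mul]; ring

section CenteredWeightedSum

variable {X Ω κ : Type*} [MeasurableSpace X] [Fintype κ] {Q : Measure X} {Y : κ → Ω → X}
  {f : X → ℝ} {Γ : ℝ}

noncomputable def centeredWeightedSum (Q : Measure X) (p : κ → ℝ) (Y : κ → Ω → X) (f : X → ℝ)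
    (ω : Ω) : ℝ :=
  ∑ k, p k * (f (Y k ω) - ∫ x, f x ∂Q)

theorem abs_sub_integral_le_two_mul [IsProbabilityMeasure Q] (hfΓ : ∀ x, |f x| ≤ Γ) (x : X) :
    |f x - ∫ y, f y ∂Q| ≤ 2 * Γ := by
  have hint : |∫ y, f y ∂Q| ≤ Γ := by
    simpa using norm_integral_le_of_norm_le_const (μ := Q)
      (ae_of_all _ fun x ↦ (norm_eq_abs _).trans_le (hfΓ x))
  linarith [abs_sub (f x) (∫ y, f y ∂Q), hfΓ x]

theorem abs_centeredWeightedSum_le [IsProbabilityMeasure Q] (p : κ → ℝ)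
    (hfΓ : ∀ x, |f x| ≤ Γ) (ω : Ω) :
    |centeredWeightedSum Q p Y f ω| ≤ ∑ k, |p k| * (2 * Γ) :=
  (abs_sum_le_sum_abs _ _).trans <| sum_le_sum fun k _ ↦ by
    rw [abs_mul]
    exact mul_le_mul_of_nonneg_left (abs_sub_integral_le_two_mul hfΓ _) (abs_nonneg _)

theorem measurable_centeredWeightedSum [MeasurableSpace Ω] (p : κ → ℝ)
    (hYmeas : ∀ k, Measurable (Y k)) (hf : Measurable f) :
    Measurable (centeredWeightedSum Q p Y f) :=
  Finset.measurable_sum _ fun k _ ↦ ((hf.comp (hYmeas k)).sub measurable_const).const_mul _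

theorem integrable_exp_mul_centeredWeightedSum [IsProbabilityMeasure Q] [MeasurableSpace Ω]
    {P : Measure Ω} [IsFiniteMeasure P] (p : κ → ℝ)
    (hYmeas : ∀ k, Measurable (Y k)) (hf : Measurable f) (hfΓ : ∀ x, |f x| ≤ Γ) (t : ℝ) :
    Integrable (fun ω ↦ exp (t * centeredWeightedSum Q p Y f ω)) P :=
  integrable_exp_mul_of_mem_Icc (measurable_centeredWeightedSum p hYmeas hf).aemeasurable
    (ae_of_all _ fun ω ↦ abs_le.mp (abs_centeredWeightedSum_le p hfΓ ω))

theorem mgf_centeredWeightedSum_le [IsProbabilityMeasure Q] [MeasurableSpace Ω] {P : Measure Ω}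
    (p : κ → ℝ) (hYmeas : ∀ k, Measurable (Y k))
    (hYlaw : ∀ k, P.map (Y k) = Q) (hYindep : iIndepFun Y P) (hf : Measurable f)
    (hfΓ : ∀ x, |f x| ≤ Γ) {t : ℝ} (ht : ∀ k, |t * p k| * (2 * Γ) ≤ 1) :
    mgf (centeredWeightedSum Q p Y f) P t
      ≤ exp (t ^ 2 * ((∑ k, p k ^ 2) * ∫ x, f x ^ 2 ∂Q)) := by
  have hfint : Integrable f Q :=
    .of_bound hf.aestronglyMeasurable Γ (ae_of_all _ fun x ↦ (norm_eq_abs _).trans_le (hfΓ x))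
  set φ : κ → X → ℝ := fun k x ↦ p k * (f x - ∫ y, f y ∂Q)
  have hφ : ∀ k, Measurable (φ k) := fun k ↦ (hf.sub measurable_const).const_mul _
  have hlaw : ∀ k (h : X → ℝ), Measurable h → ∫ ω, h (Y k ω) ∂P = ∫ x, h x ∂Q := fun k h hh ↦ by
    rw [← hYlaw k, integral_map (hYmeas k).aemeasurable hh.aestronglyMeasurable]
  have hsum : centeredWeightedSum Q p Y f = ∑ k, φ k ∘ Y k := by
    ext ω; simp [centeredWeightedSum, φ, Finset.sum_apply]
  have hbound : ∀ k ∈ univ, ∀ ω, |t * (φ k ∘ Y k) ω| ≤ 1 := fun k _ ω ↦ by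
    rw [Function.comp_apply, ← mul_assoc, abs_mul]
    exact (mul_le_mul_of_nonneg_left (abs_sub_integral_le_two_mul hfΓ _) (abs_nonneg _)).trans
      (ht k)
  have hmean : ∀ k ∈ univ, ∫ ω, (φ k ∘ Y k) ω ∂P = 0 := fun k _ ↦ by
    simp only [Function.comp_apply]
    rw [hlaw k _ (hφ k)]
    simp [φ, integral_const_mul, integral_sub hfint (integrable_const _)]
  have hsq : ∀ k, ∫ ω, (φ k ∘ Y k) ω ^ 2 ∂P ≤ p k ^ 2 * ∫ x, f x ^ 2 ∂Q := fun k ↦ by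
    simp only [Function.comp_apply]
    rw [hlaw k _ ((hφ k).pow_const 2)]
    simp only [φ, mul_pow]
    rw [integral_const_mul, ← variance_eq_integral hf.aemeasurable]
    exact mul_le_mul_of_nonneg_left (variance_le_expectation_sq hf.aestronglyMeasurable)
      (sq_nonneg _)
  rw [hsum]
  refine (hYindep.comp φ hφ |>.mgf_sum_le_exp_mul_sum_integral_sq
    (fun k ↦ (hφ k).comp (hYmeas k)) univ hbound hmean).trans ?_
  gcongr
  rw [sum_mul]
  exact sum_le_sum fun k _ ↦ hsq k

theorem integral_sup'_abs_centeredWeightedSum_le_div_add_mul [IsProbabilityMeasure Q]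
    [MeasurableSpace Ω] {P : Measure Ω} [IsProbabilityMeasure P] {ι : Type*} (G : Finset ι)
    (hG : G.Nonempty) {g : ι → X → ℝ} (hgmeas : ∀ i ∈ G, Measurable (g i))
    (hΓ : ∀ i ∈ G, ∀ x, |g i x| ≤ Γ) {D : ℝ} (hD : ∀ i ∈ G, ∫ x, g i x ^ 2 ∂Q ≤ D)
    (hYmeas : ∀ k, Measurable (Y k)) (hYlaw : ∀ k, P.map (Y k) = Q) (hYindep : iIndepFun Y P)
    {p : κ → ℝ} {M : ℝ} (hM : ∀ k, |p k| ≤ M) {t : ℝ} (ht : 0 < t) (htb : t * (2 * M * Γ) ≤ 1) :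
    ∫ ω, G.sup' hG (fun i ↦ |centeredWeightedSum Q p Y (g i) ω|) ∂P
      ≤ log (2 * G.card) / t + t * ((∑ k, p k ^ 2) * D) := by
  obtain ⟨i₀, hi₀⟩ := id hG
  obtain ⟨x₀⟩ := nonempty_of_isProbabilityMeasure Q
  have hΓ₀ : 0 ≤ Γ := (abs_nonneg _).trans (hΓ i₀ hi₀ x₀)
  refine (integral_sup'_abs_le_of_mgf_le G hG ht (ψ := t ^ 2 * ((∑ k, p k ^ 2) * D))
    (fun i hi s _ ↦ integrable_exp_mul_centeredWeightedSum p hYmeas (hgmeas i hi) (hΓ i hi) s)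
    (fun i hi s hs ↦ ?_)).trans_eq (by field_simp)
  have hst : ∀ k, |s * p k| * (2 * Γ) ≤ 1 := fun k ↦ by
    rw [abs_mul, hs]
    nlinarith [mul_le_mul_of_nonneg_left (hM k) (by positivity : 0 ≤ t * (2 * Γ))]
  refine (mgf_centeredWeightedSum_le p hYmeas hYlaw hYindep (hgmeas i hi) (hΓ i hi) hst).trans ?_
  rw [← sq_abs s, hs]
  gcongr
  exact hD i hi

theorem integral_sup'_abs_centeredWeightedSum_le [IsProbabilityMeasure Q] [MeasurableSpace Ω]
    {P : Measure Ω} [IsProbabilityMeasure P] [Nonempty κ] {ι : Type*} (G : Finset ι)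
    (hG : G.Nonempty) {g : ι → X → ℝ} (hgmeas : ∀ i ∈ G, Measurable (g i))
    (hΓ : ∀ i ∈ G, ∀ x, |g i x| ≤ Γ) {D : ℝ} (hD : ∀ i ∈ G, ∫ x, g i x ^ 2 ∂Q ≤ D)
    (hYmeas : ∀ k, Measurable (Y k)) (hYlaw : ∀ k, P.map (Y k) = Q) (hYindep : iIndepFun Y P)
    {p : κ → ℝ} {M : ℝ} (hM : ∀ k, |p k| ≤ M) :
    ∫ ω, G.sup' hG (fun i ↦ |centeredWeightedSum Q p Y (g i) ω|) ∂P
      ≤ 4 * (√((∑ k, p k ^ 2) * D * log (1 + G.card)) + M * Γ * log (1 + G.card)) := by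
  obtain ⟨i₀, hi₀⟩ := id hG
  obtain ⟨x₀⟩ := nonempty_of_isProbabilityMeasure Q
  have hΓ₀ : 0 ≤ Γ := (abs_nonneg _).trans (hΓ i₀ hi₀ x₀)
  have hM₀ : 0 ≤ M := (abs_nonneg _).trans (hM (Classical.arbitrary κ))
  have hD₀ : 0 ≤ D := (integral_nonneg fun x ↦ sq_nonneg (g i₀ x)).trans (hD i₀ hi₀)
  have hSD : 0 ≤ (∑ k, p k ^ 2) * D := mul_nonneg (sum_nonneg fun k _ ↦ sq_nonneg (p k)) hD₀
  have hb : 0 ≤ 2 * M * Γ := mul_nonneg (mul_nonneg zero_le_two hM₀) hΓ₀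
  have hcard : (1 : ℝ) ≤ G.card := mod_cast hG.card_pos
  have hlog := log_two_mul_le_two_mul_log_one_add (n := G.card) (by linarith)
  have hSDL : 0 ≤ (∑ k, p k ^ 2) * D * log (1 + G.card) := mul_nonneg hSD (log_nonneg (by linarith))
  have hsqrt : √(log (2 * G.card) * ((∑ k, p k ^ 2) * D))
      ≤ 2 * √((∑ k, p k ^ 2) * D * log (1 + G.card)) := by
    rw [sqrt_le_iff, mul_pow, sq_sqrt hSDL]
    exact ⟨by positivity, by nlinarith [mul_le_mul_of_nonneg_left hlog hSD]⟩
  calc ∫ ω, G.sup' hG (fun i ↦ |centeredWeightedSum Q p Y (g i) ω|) ∂P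
      ≤ 2 * √(log (2 * G.card) * ((∑ k, p k ^ 2) * D)) + log (2 * G.card) * (2 * M * Γ) :=
        le_two_mul_sqrt_add_mul_of_forall_le_div_add_mul (log_pos (by linarith)) hb hSD
          fun t ht htb ↦ integral_sup'_abs_centeredWeightedSum_le_div_add_mul G hG hgmeas hΓ hD
            hYmeas hYlaw hYindep hM ht htb
    _ ≤ 4 * (√((∑ k, p k ^ 2) * D * log (1 + G.card)) + M * Γ * log (1 + G.card)) := by
        nlinarith [mul_le_mul_of_nonneg_right hlog hb]

end CenteredWeightedSum

theorem maximal_inequality_finite_class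
    {X : Type*} [MeasurableSpace X] (Q : Measure X) [IsProbabilityMeasure Q]
    {Ω : Type*} [MeasurableSpace Ω] (P : Measure Ω) [IsProbabilityMeasure P]
    {ι : Type*} (G : Finset ι) (hG : G.Nonempty)
    (g : ι → X → ℝ) (hgmeas : ∀ i ∈ G, Measurable (g i))
    (Γ : ℝ) (hΓ : ∀ i ∈ G, ∀ x, |g i x| ≤ Γ)
    (Δ : ℝ) (hΔ : Δ = Real.sqrt (G.sup' hG fun i => ∫ x, (g i x) ^ 2 ∂Q))
    (m : ℕ) (Y : Fin (m + 1) → Ω → X)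
    (hYmeas : ∀ k, Measurable (Y k))
    (hYlaw : ∀ k, Measure.map (Y k) P = Q)
    (hYindep : iIndepFun Y P)
    (p : Fin (m + 1) → ℝ) :
    ∫ ω, G.sup' hG (fun i => |∑ k, p k * (g i (Y k ω) - ∫ x, g i x ∂Q)|) ∂P
      ≤ 24 * (Real.sqrt (∑ k, (p k) ^ 2) * Δ * Real.sqrt (Real.log (1 + G.card))
          + (Finset.univ.sup' ⟨0, mem_univ 0⟩ fun k => |p k|) * Γ * Real.log (1 + G.card)) := by
  obtain ⟨i₀, hi₀⟩ := id hG
  have hsup₀ : 0 ≤ G.sup' hG fun i ↦ ∫ x, g i x ^ 2 ∂Q :=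
    (integral_nonneg fun x ↦ sq_nonneg (g i₀ x)).trans (le_sup' (fun i ↦ ∫ x, g i x ^ 2 ∂Q) hi₀)
  have hΔsq : ∀ i ∈ G, ∫ x, g i x ^ 2 ∂Q ≤ Δ ^ 2 := fun i hi ↦ by
    rw [hΔ, sq_sqrt hsup₀]
    exact le_sup' (fun i ↦ ∫ x, g i x ^ 2 ∂Q) hi
  have hM : ∀ k, |p k| ≤ univ.sup' ⟨0, mem_univ 0⟩ fun k ↦ |p k| :=
    fun k ↦ le_sup' (fun k ↦ |p k|) (mem_univ k)
  have hbound := integral_sup'_abs_centeredWeightedSum_le G hG hgmeas hΓ hΔsq hYmeas hYlaw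
    hYindep hM
  rw [sqrt_mul (by positivity), sqrt_mul (sum_nonneg fun k _ ↦ sq_nonneg (p k)),
    sqrt_sq (hΔ ▸ sqrt_nonneg _)] at hbound
  -- the left side is nonnegative, so the bracket is too and `4 * _ ≤ 24 * _`
  have hlhs : 0 ≤ ∫ ω, G.sup' hG (fun i ↦ |centeredWeightedSum Q p Y (g i) ω|) ∂P :=
    integral_nonneg fun ω ↦ (abs_nonneg _).trans (le_sup' (fun i ↦ |_|) hi₀)
  exact hbound.trans (by linarith)
end

section
/- Let I be a countable index set and g : I → ℝ a summable function. Then sup over all subsets A ⊆ I of |∑_{i∈A} g(i)| equals (1/2)(∑_{i∈I} |g(i)| + |∑_{i∈I} g(i)|). -/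
theorem iSup_abs_subset_sum_eq
    {I : Type*} [Countable I] (g : I → ℝ) (hg : Summable fun i => |g i|) :
    (⨆ A : Set I, |∑' i : A, g i|)
      = (1 / 2) * ((∑' i, |g i|) + |∑' i, g i|) := by
  have hgs : Summable g := summable_abs_iff.mp hg
  set P := ∑' i, |g i| with hP
  set S := ∑' i, g i with hS
  set p : I → ℝ := fun i => max (g i) 0 with hpdef
  set m : I → ℝ := fun i => min (g i) 0 with hmdef
  have hp0 : ∀ i, 0 ≤ p i := fun i => le_max_right _ _
  have hm0 : ∀ i, m i ≤ 0 := fun i => min_le_right _ _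
  have hple : ∀ i, p i ≤ |g i| := fun i => max_le (le_abs_self _) (abs_nonneg _)
  have hmle : ∀ i, -m i ≤ |g i| := fun i => by
    rw [neg_le]; exact le_min (neg_abs_le _) (neg_nonpos.mpr (abs_nonneg _))
  have hpsum : Summable p := hg.of_nonneg_of_le hp0 hple
  have hmsum : Summable m := by
    have : Summable fun i => -m i :=
      hg.of_nonneg_of_le (fun i => neg_nonneg.mpr (hm0 i)) hmle
    simpa using this.neg
  have hadd : ∑' i, p i + ∑' i, m i = S := by
    rw [← Summable.tsum_add hpsum hmsum]
    exact tsum_congr fun i => by simp [hpdef, hmdef, max_add_min (g i) 0]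
  have hsub : ∑' i, p i - ∑' i, m i = P := by
    rw [← Summable.tsum_sub hpsum hmsum]
    refine tsum_congr fun i => ?_
    simpa using max_sub_min_eq_abs (g i) 0
  have htp : ∑' i, p i = (S + P) / 2 := by linarith
  have htm : ∑' i, m i = (S - P) / 2 := by linarith
  have hSP : |S| ≤ P := by
    have := norm_tsum_le_tsum_norm (f := g) (by simpa using hg)
    simpa [hS, hP] using this
  -- upper bound for each subset
  have hub : ∀ A : Set I, |∑' i : A, g i| ≤ 1 / 2 * (P + |S|) := by
    intro A
    rw [abs_le]
    constructor
    · have h1 : ∑' i, m i ≤ ∑' i : A, m i := by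
        have := Summable.tsum_subtype_le (fun i => -m i) A
          (fun i => neg_nonneg.mpr (hm0 i))
          (hg.of_nonneg_of_le (fun i => neg_nonneg.mpr (hm0 i)) hmle)
        rw [tsum_neg, tsum_neg, neg_le_neg_iff] at this
        exact this
      have h2 : ∑' i : A, m i ≤ ∑' i : A, g i :=
        Summable.tsum_le_tsum (fun i => min_le_left _ _) (hmsum.subtype A) (hgs.subtype A)
      have h3 : -|S| ≤ S := neg_abs_le S
      linarith
    · have h1 : ∑' i : A, g i ≤ ∑' i : A, p i :=
        Summable.tsum_le_tsum (fun i => le_max_left _ _) (hgs.subtype A) (hpsum.subtype A)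
      have h2 : ∑' i : A, p i ≤ ∑' i, p i := Summable.tsum_subtype_le p A hp0 hpsum
      have h3 : S ≤ |S| := le_abs_self S
      linarith
  have hbdd : BddAbove (Set.range fun A : Set I => |∑' i : A, g i|) :=
    ⟨1 / 2 * (P + |S|), by rintro x ⟨A, rfl⟩; exact hub A⟩
  refine le_antisymm (ciSup_le fun A => hub A) ?_
  rcases le_or_gt 0 S with hSpos | hSneg
  · have : ∑' i : ({i | 0 ≤ g i} : Set I), g i = ∑' i, p i := by
      rw [show (∑' i : ({i | 0 ≤ g i} : Set I), g i) = ∑' i : ({i | 0 ≤ g i} : Set I), p i from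
        tsum_congr fun i => (max_eq_left i.2).symm]
      exact tsum_subtype_eq_of_support_subset fun i hi => by
        simp only [hpdef, Function.mem_support] at hi
        by_contra h
        simp only [Set.mem_setOf_eq, not_le] at h
        exact hi (max_eq_right h.le)
    have hval : |∑' i : ({i | 0 ≤ g i} : Set I), g i| = 1 / 2 * (P + |S|) := by
      rw [this, htp, abs_of_nonneg (by have := abs_nonneg S; linarith), abs_of_nonneg hSpos]; ring
    calc 1 / 2 * (P + |S|) = |∑' i : ({i | 0 ≤ g i} : Set I), g i| := hval.symm
      _ ≤ ⨆ A : Set I, |∑' i : A, g i| := le_ciSup hbdd _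
  · have : ∑' i : ({i | g i < 0} : Set I), g i = ∑' i, m i := by
      rw [show (∑' i : ({i | g i < 0} : Set I), g i) = ∑' i : ({i | g i < 0} : Set I), m i from
        tsum_congr fun i => (min_eq_left i.2.le).symm]
      exact tsum_subtype_eq_of_support_subset fun i hi => by
        simp only [hmdef, Function.mem_support] at hi
        by_contra h
        simp only [Set.mem_setOf_eq, not_lt] at h
        exact hi (min_eq_right h)
    have hval : |∑' i : ({i | g i < 0} : Set I), g i| = 1 / 2 * (P + |S|) := by
      rw [this, htm, abs_of_nonpos (by have := abs_nonneg S; linarith), abs_of_neg hSneg]; ring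
    calc 1 / 2 * (P + |S|) = |∑' i : ({i | g i < 0} : Set I), g i| := hval.symm
      _ ≤ ⨆ A : Set I, |∑' i : A, g i| := le_ciSup hbdd _
end
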